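/- For all constants ε > 0 and α > 0 there exists N ∈ ℕ such that for all n ≥ N and every τ with 0 ≤ τ ≤ n^{0.9}: no mechanism M : {0,1}^n → PMF({0,1}^n → Bool) that is (ε, n^{−27})-SDP is α-useful for the low-diameter-set utility u^LDS_τ, where u^LDS_τ(x, C) = 1 iff C(x) = 1 and every z ∈ {0,1}^n with ‖z − x‖₁ > τ satisfies C(z) = 0. -/

import Mathlib

/-!
A useful mechanism yields a reconstruction attack. Decoding an output circuit to any point it
accepts gives, with probability at least `α`, a point within distance `τ` of the dataset `x`, so
in expectation the decoded point agrees with `x` in at least `(n - τ) α` coordinates. Privacy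
moves the event "decoded bit `i` equals `x i`" to the neighbour of `x` with bit `i` flipped,
where it becomes a disagreement. Counting only decoded points within distance `τ + 1`, any
dataset sees at most `τ + 1` such disagreements in expectation, so averaging over all `x` gives
`(n - τ) α ≤ e^ε (τ + 1) + n δ`, which fails for `τ ≤ n^0.9`, `δ = n^(-27)` and large `n`.
-/

open scoped ENNReal

/-- Probability that a sample from `p` lands in `S`. -/
noncomputable def pr {Y : Type*} (p : PMF Y) (S : Set Y) : ℝ :=
  (p.toOuterMeasure S).toReal

/-- `(ε, δ)`-statistical differential privacy for mechanisms on bit-vector datasets. -/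
def IsSDP {ι : Type*} [Fintype ι] {Y : Type*}
    (M : (ι → Bool) → PMF Y) (ε δ : ℝ) : Prop :=
  ∀ x x' : ι → Bool, hammingDist x x' = 1 →
    ∀ S : Set Y, pr (M x) S ≤ Real.exp ε * pr (M x') S + δ

open Finset Filter

section Pr

variable {Y : Type*}

theorem pr_mono (p : PMF Y) {S T : Set Y} (h : S ⊆ T) : pr p S ≤ pr p T :=
  ENNReal.toReal_mono (p.toOuterMeasure_apply T ▸ p.tsum_coe_indicator_ne_top T)
    (p.toOuterMeasure.mono h)

variable [Fintype Y]

theorem sum_toReal_apply (p : PMF Y) : ∑ y, (p y).toReal = 1 := by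
  rw [← ENNReal.toReal_sum fun y _ => p.apply_ne_top y, ← tsum_fintype (L := .unconditional _),
    p.tsum_coe, ENNReal.toReal_one]

theorem pr_eq_sum_indicator (p : PMF Y) (S : Set Y) :
    pr p S = ∑ y, S.indicator (fun y => (p y).toReal) y := by
  rw [pr, p.toOuterMeasure_apply_fintype,
    ENNReal.toReal_sum fun y _ => (Set.indicator_le_self S p y).trans_lt (p.apply_lt_top y) |>.ne]
  exact sum_congr rfl fun y _ => congr_fun (Set.indicator_comp_of_zero ENNReal.toReal_zero).symm y

open Classical in
theorem sum_pr_eq_sum_card_mul {ι : Type*} [Fintype ι] (p : PMF Y) (S : ι → Set Y) :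
    ∑ i, pr p (S i) = ∑ y, #{i | y ∈ S i} * (p y).toReal := by
  simp_rw [pr_eq_sum_indicator, Set.indicator_apply]
  rw [sum_comm]
  refine sum_congr rfl fun y _ => ?_
  rw [← sum_filter, sum_const, nsmul_eq_mul]

open Classical in
theorem sum_pr_le_of_card_le {ι : Type*} [Fintype ι] (p : PMF Y) (S : ι → Set Y) {k : ℝ}
    (h : ∀ y, #{i | y ∈ S i} ≤ k) : ∑ i, pr p (S i) ≤ k :=
  calc ∑ i, pr p (S i) ≤ ∑ y, k * (p y).toReal := by
        rw [sum_pr_eq_sum_card_mul]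
        gcongr with y
        exact h y
    _ = k := by rw [← mul_sum, sum_toReal_apply, mul_one]

open Classical in
theorem mul_pr_le_sum_pr_of_le_card {ι : Type*} [Fintype ι] (p : PMF Y) (A : Set Y)
    (S : ι → Set Y) {k : ℝ} (h : ∀ y ∈ A, k ≤ #{i | y ∈ S i}) :
    k * pr p A ≤ ∑ i, pr p (S i) := by
  rw [pr_eq_sum_indicator, mul_sum, sum_pr_eq_sum_card_mul]
  refine sum_le_sum fun y _ => ?_
  by_cases hy : y ∈ A
  · rw [Set.indicator_of_mem hy]
    exact mul_le_mul_of_nonneg_right (h y hy) ENNReal.toReal_nonneg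
  · rw [Set.indicator_of_notMem hy, mul_zero]
    positivity

end Pr

section FlipBit

variable {ι : Type*} [DecidableEq ι]

def flipBit (i : ι) (x : ι → Bool) : ι → Bool :=
  Function.update x i (!x i)

@[simp]
theorem flipBit_apply_self (i : ι) (x : ι → Bool) : flipBit i x i = !x i :=
  Function.update_self ..

theorem flipBit_involutive (i : ι) : Function.Involutive (flipBit i) := fun x => by
  simp [flipBit, Function.update_idem, Function.update_eq_self]

theorem hammingDist_flipBit [Fintype ι] (i : ι) (x : ι → Bool) :
    hammingDist x (flipBit i x) = 1 := by
  rw [hammingDist, card_eq_one]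
  refine ⟨i, ?_⟩
  ext j
  by_cases hj : j = i
  · simp [hj]
  · simp [flipBit, hj, Function.update_apply]

end FlipBit

theorem hammingDist_epsilon_le {ι : Type*} [Fintype ι] {C : (ι → Bool) → Bool} {x : ι → Bool}
    {τ : ℕ} (hCx : C x = true) (hC : ∀ z, τ < hammingDist z x → C z = false) :
    hammingDist (Classical.epsilon (C · = true)) x ≤ τ := by
  by_contra! h
  simpa [hC _ h] using Classical.epsilon_spec (p := (C · = true)) ⟨x, hCx⟩

section Reconstruction

variable {ι Y : Type*} [Fintype ι] [Fintype Y]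

theorem mul_pr_le_sum_pr_agree (p : PMF Y) (f : Y → ι → Bool) (x : ι → Bool) (τ : ℕ) :
    (Fintype.card ι - τ : ℝ) * pr p {C | hammingDist (f C) x ≤ τ} ≤
      ∑ i, pr p {C | f C i = x i ∧ hammingDist (f C) x ≤ τ} := by
  classical
  refine mul_pr_le_sum_pr_of_le_card p _ _ fun C (hC : hammingDist (f C) x ≤ τ) => ?_
  have hagree : #{i | f C i = x i} + hammingDist (f C) x = Fintype.card ι :=
    card_filter_add_card_filter_not _
  simp only [Set.mem_ofPred_eq, hC, and_true]
  rw [← hagree]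
  push_cast
  linarith [show (hammingDist (f C) x : ℝ) ≤ τ from mod_cast hC]

theorem sum_pr_disagree_le (p : PMF Y) (f : Y → ι → Bool) (y : ι → Bool) (τ : ℕ) :
    ∑ i, pr p {C | f C i ≠ y i ∧ hammingDist (f C) y ≤ τ} ≤ τ := by
  classical
  refine sum_pr_le_of_card_le p _ fun C => ?_
  by_cases hC : hammingDist (f C) y ≤ τ
  · simp only [Set.mem_ofPred_eq, hC, and_true]
    exact_mod_cast hC
  · simp [hC]

theorem IsSDP.card_sub_mul_le [DecidableEq ι] {M : (ι → Bool) → PMF Y} {ε δ : ℝ}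
    (hM : IsSDP M ε δ) (f : Y → ι → Bool) {τ : ℕ} (hτ : τ ≤ Fintype.card ι) {α : ℝ}
    (hf : ∀ x, α ≤ pr (M x) {C | hammingDist (f C) x ≤ τ}) :
    (Fintype.card ι - τ) * α ≤ Real.exp ε * (τ + 1) + Fintype.card ι * δ := by
  set n := Fintype.card ι
  set N := Fintype.card (ι → Bool)
  let S x i := {C | f C i = x i ∧ hammingDist (f C) x ≤ τ}
  let T y i := {C | f C i ≠ y i ∧ hammingDist (f C) y ≤ τ + 1}
  have hST x i : S x i ⊆ T (flipBit i x) i := fun C ⟨hi, hC⟩ =>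
    ⟨by simp [hi], (hammingDist_triangle _ x _).trans (by rw [hammingDist_flipBit]; omega)⟩
  have hagree x : (n - τ) * α ≤ ∑ i, pr (M x) (S x i) :=
    (mul_le_mul_of_nonneg_left (hf x) (by simpa [n] using hτ)).trans
      (mul_pr_le_sum_pr_agree (M x) f x τ)
  have hpriv x i : pr (M x) (S x i) ≤ Real.exp ε * pr (M (flipBit i x)) (T (flipBit i x) i) + δ :=
    (hM x _ (hammingDist_flipBit i x) _).trans <| by
      gcongr
      exact pr_mono _ (hST x i)
  have hdisagree : ∑ x, ∑ i, pr (M (flipBit i x)) (T (flipBit i x) i) ≤ N * (τ + 1) :=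
    calc ∑ x, ∑ i, pr (M (flipBit i x)) (T (flipBit i x) i)
        = ∑ y, ∑ i, pr (M y) (T y i) := by
          rw [sum_comm, sum_comm (γ := ι → Bool)]
          exact sum_congr rfl fun i _ =>
            Equiv.sum_comp (flipBit_involutive i).toPerm fun y => pr (M y) (T y i)
      _ ≤ ∑ _y : ι → Bool, ((τ : ℝ) + 1) :=
          sum_le_sum fun y _ => mod_cast sum_pr_disagree_le (M y) f y (τ + 1)
      _ = N * (τ + 1) := by rw [sum_const, card_univ, nsmul_eq_mul]
  have key : N * ((n - τ) * α) ≤ N * (Real.exp ε * (τ + 1) + n * δ) :=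
    calc N * ((n - τ) * α) = ∑ _x : ι → Bool, (n - τ) * α := by
          rw [sum_const, card_univ, nsmul_eq_mul]
      _ ≤ ∑ x, ∑ i, pr (M x) (S x i) := sum_le_sum fun x _ => hagree x
      _ ≤ ∑ x, ∑ i, (Real.exp ε * pr (M (flipBit i x)) (T (flipBit i x) i) + δ) :=
          sum_le_sum fun x _ => sum_le_sum fun i _ => hpriv x i
      _ = Real.exp ε * ∑ x, ∑ i, pr (M (flipBit i x)) (T (flipBit i x) i) + N * (n * δ) := by
          simp [sum_add_distrib, mul_sum, N, n]
      _ ≤ N * (Real.exp ε * (τ + 1) + n * δ) := by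
          linarith [mul_le_mul_of_nonneg_left hdisagree (Real.exp_pos ε).le]
  exact le_of_mul_le_mul_left key (by positivity)

end Reconstruction

theorem eventually_mul_add_lt_sub_mul {p : ℝ} (hp₀ : 0 ≤ p) (hp₁ : p < 1) {a : ℝ} (ha : 0 < a)
    (b c : ℝ) :
    ∀ᶠ n : ℝ in atTop, ∀ τ, 0 ≤ τ → τ ≤ n ^ p → b * (τ + 1) + c < (n - τ) * a := by
  let K := (a + 2 * |b| + |c| + 1) / a
  filter_upwards [(tendsto_rpow_atTop (sub_pos.2 hp₁)).eventually_ge_atTop K,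
    eventually_ge_atTop 1] with n hK hn τ hτ₀ hτ
  have hnp : 1 ≤ n ^ p := Real.one_le_rpow hn hp₀
  have hsplit : n = n ^ (1 - p) * n ^ p := by
    rw [← Real.rpow_add (by linarith), sub_add_cancel, Real.rpow_one]
  have haK : a * K = a + 2 * |b| + |c| + 1 := mul_div_cancel₀ _ ha.ne'
  have hn_large : a * K * n ^ p ≤ a * n :=
    calc a * K * n ^ p ≤ a * n ^ (1 - p) * n ^ p := by gcongr
      _ = a * n := by rw [mul_assoc, ← hsplit]
  have hb : b * (τ + 1) ≤ |b| * (n ^ p + 1) :=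
    (mul_le_mul_of_nonneg_right (le_abs_self b) (by linarith)).trans (by gcongr)
  nlinarith [le_abs_self c, abs_nonneg b, abs_nonneg c]

theorem no_sdp_for_lds_general (ε α : ℝ) (hα : 0 < α) :
    ∃ N : ℕ, ∀ n ≥ N, ∀ τ : ℕ, (τ : ℝ) ≤ (n : ℝ) ^ (0.9 : ℝ) →
      ∀ M : (Fin n → Bool) → PMF ((Fin n → Bool) → Bool),
        IsSDP M ε (1 / (n : ℝ) ^ (27 : ℕ)) →
        ¬ (∀ x : Fin n → Bool,
            α ≤ pr (M x)
              {C | C x = true ∧ ∀ z : Fin n → Bool, τ < hammingDist z x → C z = false}) := by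
  obtain ⟨N, hN⟩ := eventually_atTop.1 <|
    (tendsto_natCast_atTop_atTop.eventually <|
      eventually_mul_add_lt_sub_mul (p := 0.9) (by norm_num) (by norm_num) hα (Real.exp ε) 1).and
    (eventually_ge_atTop 1)
  refine ⟨N, fun n hn τ hτ M hM hU => ?_⟩
  obtain ⟨hgap, hn₁⟩ := hN n hn
  have hn₁' : (1 : ℝ) ≤ n := mod_cast hn₁
  have hτn : τ ≤ n := by exact_mod_cast hτ.trans (Real.rpow_le_self_of_one_le hn₁' (by norm_num))
  have hδ : (n : ℝ) * (1 / (n : ℝ) ^ 27) ≤ 1 := by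
    rw [mul_one_div, div_le_one (by positivity)]
    exact le_self_pow₀ hn₁' (by norm_num)
  have hrec := hM.card_sub_mul_le (fun C => Classical.epsilon (C · = true)) (by simpa using hτn)
    fun x => (hU x).trans (pr_mono _ fun C hC => hammingDist_epsilon_le hC.1 hC.2)
  rw [Fintype.card_fin] at hrec
  linarith [hgap τ τ.cast_nonneg hτ]

/-- No `(ε, n^{-27})`-SDP mechanism outputting circuits (Boolean functions on `{0,1}^n`)
is `α`-useful for the low-diameter-set utility `u^LDS_τ` with `τ ≤ n^{0.9}`,
for all sufficiently large `n`. Here `u^LDS_τ(x, C) = 1` iff `C(x) = 1` and `C(z) = 0`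
for every `z` at distance greater than `τ` from `x`. -/
theorem no_sdp_for_lds (ε α : ℝ) (hε : 0 < ε) (hα : 0 < α) :
    ∃ N : ℕ, ∀ n ≥ N, ∀ τ : ℕ, (τ : ℝ) ≤ (n : ℝ) ^ (0.9 : ℝ) →
      ∀ M : (Fin n → Bool) → PMF ((Fin n → Bool) → Bool),
        IsSDP M ε (1 / (n : ℝ) ^ (27 : ℕ)) →
        ¬ (∀ x : Fin n → Bool,
            α ≤ pr (M x)
              {C | C x = true ∧ ∀ z : Fin n → Bool, τ < hammingDist z x → C z = false}) :=
  no_sdp_for_lds_general ε α hα
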